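/- For all integers q ≥ 2 and n ≥ 1, the family 𝓖_q ∪ 𝓛_q is n-cell implementable under scenario (∗◦) if and only if q ≤ n. -/

import Mathlib

/-- The alphabet 𝔹• = {0, 1, ∗, •}. -/
inductive BB : Type
  | zero
  | one
  | star
  | reject
deriving DecidableEq

instance : Fintype BB where
  elems := {BB.zero, BB.one, BB.star, BB.reject}
  complete := by intro x; cases x <;> simp

/-- The cell function T : 𝔹• × 𝔹• → 𝔹: T(u,ϑ) = 1 iff u = ∗, or ϑ = ∗,
or u,ϑ ∈ 𝔹 with u = ϑ. -/
def Tcell : BB → BB → Bool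
  | BB.star, _ => true
  | _, BB.star => true
  | BB.zero, BB.zero => true
  | BB.one, BB.one => true
  | _, _ => false

/-- The word-level function T(u,ϑ) = ⋀_{j<n} T(u_j, ϑ_j). -/
def Tword {n : ℕ} (u θ : Fin n → BB) : Bool :=
  decide (∀ j, Tcell (u j) (θ j) = true)

/-- The alphabet 𝔹 = {0,1} ⊆ 𝔹•. -/
def Bcirc : Set BB := {BB.zero, BB.one}

/-- The alphabet 𝔹∗ = {0,1,∗} ⊆ 𝔹•. -/
def Bstar : Set BB := {BB.zero, BB.one, BB.star}

/-- The full alphabet 𝔹•. -/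
def Bdot : Set BB := Set.univ

/-- A family Φ of functions {0,…,q−1} → 𝔹 is n-cell implementable under
scenario (A,B) if there are mappings u : {0,…,q−1} → A^n and ϑ : Φ → B^n
with f(x) = T(u(x), ϑ(f)) for all f ∈ Φ and x. -/
def Implementable (A B : Set BB) (n q : ℕ) (Φ : Set (Fin q → Bool)) : Prop :=
  ∃ u : Fin q → Fin n → BB, ∃ θ : (Fin q → Bool) → Fin n → BB,
    (∀ x j, u x j ∈ A) ∧ (∀ f ∈ Φ, ∀ j, θ f j ∈ B) ∧
    (∀ f ∈ Φ, ∀ x, f x = Tword (u x) (θ f))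

/-- The family 𝓔_q = { x ↦ [x = t] : t ∈ [q⟩ }. -/
def Eset (q : ℕ) : Set (Fin q → Bool) :=
  { f | ∃ t : Fin q, f = fun x => decide (x = t) }

/-- The family 𝓝_q = { x ↦ [x ≠ t] : t ∈ [q⟩ }. -/
def Nset (q : ℕ) : Set (Fin q → Bool) :=
  { f | ∃ t : Fin q, f = fun x => decide (x ≠ t) }

/-- The family 𝓖_q = { x ↦ [x ≥ t] : t ∈ [q⟩ }. -/
def Gset (q : ℕ) : Set (Fin q → Bool) :=
  { f | ∃ t : Fin q, f = fun x => decide (t ≤ x) }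

/-- The family 𝓛_q = { x ↦ [x ≤ t] : t ∈ [q⟩ }. -/
def Lset (q : ℕ) : Set (Fin q → Bool) :=
  { f | ∃ t : Fin q, f = fun x => decide (x ≤ t) }


/-!
With values in `{0, 1, ∗}` on the input side and `{0, 1}` on the parameter side, the constant
function `1 ∈ 𝓛_q` forces every non-`∗` entry of column `j` to equal one fixed bit `c_j`. For each
input `x` some function of the family rejects `x` but accepts every `z < x` (`[· ≥ 1]` for
`x = 0`, `[· ≤ x - 1]` otherwise); a cell where it rejects `x` carries a non-`∗` entry of `u(x)`,
and no `z < x` has a non-`∗` entry there. These cells are therefore pairwise distinct, so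
`q ≤ n`. Conversely, for `q ≤ n` input `x` writes `1` into cell `x` and `∗` everywhere else,
while `f` writes its truth table into the first `q` cells; this implements every family.
-/

namespace BB

def ofBool (b : Bool) : BB := if b then BB.one else BB.zero

lemma ofBool_mem_Bcirc (b : Bool) : ofBool b ∈ Bcirc := by
  cases b <;> simp [ofBool, Bcirc]

end BB

lemma Tcell_star_left (b : BB) : Tcell BB.star b = true := by
  cases b <;> rfl

lemma Tcell_one_ofBool (b : Bool) : Tcell BB.one (BB.ofBool b) = b := by
  cases b <;> rfl

lemma Tcell_eq_true_iff {a b : BB} (ha : a ∈ Bstar) (hb : b ∈ Bcirc) :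
    Tcell a b = true ↔ a = BB.star ∨ a = b := by
  simp only [Bstar, Bcirc, Set.mem_insert_iff, Set.mem_singleton_iff] at ha hb
  rcases ha with rfl | rfl | rfl <;> rcases hb with rfl | rfl <;> simp [Tcell]

lemma Tword_eq_true_iff {n : ℕ} (u θ : Fin n → BB) :
    Tword u θ = true ↔ ∀ j, Tcell (u j) (θ j) = true :=
  decide_eq_true_iff

lemma Tword_eq_Tcell_of_eq_star {n : ℕ} {u : Fin n → BB} (θ : Fin n → BB) (i : Fin n)
    (hu : ∀ j ≠ i, u j = BB.star) : Tword u θ = Tcell (u i) (θ i) := by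
  refine Bool.eq_iff_iff.mpr ((Tword_eq_true_iff u θ).trans ⟨fun h => h i, fun h j => ?_⟩)
  by_cases hj : j = i
  · exact hj ▸ h
  · rw [hu j hj]
    exact Tcell_star_left _

theorem implementable_starCirc_of_le {q n : ℕ} (h : q ≤ n) (Φ : Set (Fin q → Bool)) :
    Implementable Bstar Bcirc n q Φ := by
  refine ⟨fun x j => if j = Fin.castLE h x then BB.one else BB.star,
    fun f j => if hj : (j : ℕ) < q then BB.ofBool (f ⟨j, hj⟩) else BB.zero, ?_, ?_, ?_⟩
  · intro x j
    dsimp only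
    split_ifs <;> simp [Bstar]
  · intro f _ j
    dsimp only
    split_ifs
    · exact BB.ofBool_mem_Bcirc _
    · simp [Bcirc]
  · intro f _ x
    rw [Tword_eq_Tcell_of_eq_star _ (Fin.castLE h x) fun j hj => if_neg hj, if_pos rfl]
    simp only [Fin.val_castLE, x.isLt, dif_pos, Fin.eta, Tcell_one_ofBool]

theorem le_of_implementable_starCirc {q n : ℕ} {Φ : Set (Fin q → Bool)}
    (h_true : (fun _ => true) ∈ Φ)
    (h_sep : ∀ x : Fin q, ∃ f ∈ Φ, f x = false ∧ ∀ z < x, f z = true)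
    (h : Implementable Bstar Bcirc n q Φ) : q ≤ n := by
  obtain ⟨u, θ, hu, hθ, hT⟩ := h
  have hcell : ∀ f ∈ Φ, ∀ x j, Tcell (u x j) (θ f j) = true ↔ u x j = BB.star ∨ u x j = θ f j :=
    fun f hf x j => Tcell_eq_true_iff (hu x j) (hθ f hf j)
  have accepts : ∀ f ∈ Φ, ∀ x, f x = true → ∀ j, Tcell (u x j) (θ f j) = true :=
    fun f hf x hx => (Tword_eq_true_iff _ _).mp (hT f hf x ▸ hx)
  set c := θ fun _ => true
  have hcol : ∀ x j, u x j ≠ BB.star → u x j = c j := fun x j hx =>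
    ((hcell _ h_true x j).mp (accepts _ h_true x rfl j)).resolve_left hx
  choose f hfΦ hfx hfz using h_sep
  have hrej : ∀ x, ∃ j, u x j ≠ BB.star ∧ θ (f x) j ≠ c j := by
    intro x
    have : ¬ ∀ j, Tcell (u x j) (θ (f x) j) = true := by
      rw [← Tword_eq_true_iff, ← hT _ (hfΦ x), hfx]
      decide
    obtain ⟨j, hj⟩ := not_forall.mp this
    rw [hcell _ (hfΦ x), not_or] at hj
    exact ⟨j, hj.1, hcol x j hj.1 ▸ Ne.symm hj.2⟩
  choose j hj_ne hj_rej using hrej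
  -- every `z < x` is accepted by `f x`, so `θ (f x)` agrees with `c` on the cell `j z`
  refine Fin.le_of_injective j (Function.Injective.of_lt_imp_ne fun z x hzx hjzx => ?_)
  have hacc : u z (j z) = θ (f x) (j z) :=
    ((hcell _ (hfΦ x) z (j z)).mp (accepts _ (hfΦ x) z (hfz x z hzx) (j z))).resolve_left (hj_ne z)
  exact hj_rej x (hjzx ▸ hacc.symm.trans (hcol z (j z) (hj_ne z)))

lemma const_true_mem_Lset {q : ℕ} (hq : 0 < q) : (fun _ => true) ∈ Lset q :=
  ⟨⟨q - 1, by omega⟩, funext fun x => by simp only [Fin.le_def, true_eq_decide_iff]; omega⟩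

lemma exists_mem_GLset_reject_accept_lt {q : ℕ} (hq : 2 ≤ q) (x : Fin q) :
    ∃ f ∈ Gset q ∪ Lset q, f x = false ∧ ∀ z < x, f z = true := by
  rcases Nat.eq_zero_or_pos x with hx | hx
  · refine ⟨_, Or.inl ⟨⟨1, hq⟩, rfl⟩, ?_, fun z hz => ?_⟩
    · simp [Fin.le_def, hx]
    · simp [Fin.lt_def, hx] at hz
  · refine ⟨_, Or.inr ⟨⟨x - 1, by omega⟩, rfl⟩, ?_, fun z hz => ?_⟩
    · simp only [Fin.le_def, decide_eq_false_iff_not]; omega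
    · rw [Fin.lt_def] at hz
      simp only [Fin.le_def, decide_eq_true_eq]; omega

theorem GLset_implementable_starCirc_general (q n : ℕ) (hq : 2 ≤ q) :
    Implementable Bstar Bcirc n q (Gset q ∪ Lset q) ↔ q ≤ n :=
  ⟨le_of_implementable_starCirc (Or.inr (const_true_mem_Lset (by omega)))
      (exists_mem_GLset_reject_accept_lt hq),
    fun h => implementable_starCirc_of_le h _⟩

theorem GLset_implementable_starCirc (q n : ℕ) (hq : 2 ≤ q) (hn : 1 ≤ n) :
    Implementable Bstar Bcirc n q (Gset q ∪ Lset q) ↔ q ≤ n :=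
  GLset_implementable_starCirc_general q n hq
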